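/- arXiv:2012.00123 — 2 statements merged into one kernel-verified Lean document; each statement's English description precedes it below -/
import Mathlib

section
/- Let d₁, d₂ ≥ 1, ρ ∈ (0,1), λ ≥ 0, and define the Schur complement H = (1−ρ)I_{d₁} + (ρ − d₂ρ²/(d₂ρ−ρ+λ+1))·1_{d₁}1_{d₁}ᵀ. Then H is symmetric positive definite and its condition number equals 1 + ((1−ρ+λ)/(d₂ρ−ρ+λ+1))·(d₁ρ/(1−ρ)). -/
/-! `H` is `(1 - ρ) • 1 + c • J` with `J` the all-ones matrix, and the Schur coefficient simplifies to
`c = ρ (1 - ρ + λ) / (d₂ρ - ρ + λ + 1) > 0`. Since `J` is the rank-one matrix `𝟙 𝟙ᵀ`, `H` is positive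
definite, acts as `1 - ρ` on mean-zero vectors and as `1 - ρ + d₁ c` on `𝟙`; the condition number is
the ratio of these two eigenvalues. -/

open Matrix BigOperators

def onesMat (d : ℕ) : Matrix (Fin d) (Fin d) ℝ := Matrix.of fun _ _ => 1

lemma onesMat_eq_vecMulVec (d : ℕ) : onesMat d = vecMulVec (fun _ => 1) (fun _ => 1) := by
  ext i j
  simp [onesMat, vecMulVec]

lemma onesMat_mulVec (d : ℕ) (v : Fin d → ℝ) : onesMat d *ᵥ v = fun _ => ∑ i, v i := by
  ext i
  simp [onesMat, mulVec, dotProduct]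

lemma onesMat_posSemidef (d : ℕ) : (onesMat d).PosSemidef := by
  simpa [onesMat_eq_vecMulVec] using posSemidef_vecMulVec_self_star (fun _ : Fin d => (1 : ℝ))

lemma smul_one_add_smul_onesMat_mulVec {d : ℕ} (a c : ℝ) (v : Fin d → ℝ) :
    (a • (1 : Matrix (Fin d) (Fin d) ℝ) + c • onesMat d) *ᵥ v
      = a • v + (c * ∑ i, v i) • fun _ => 1 := by
  ext i
  simp [add_mulVec, smul_mulVec, onesMat_mulVec]

lemma smul_one_add_smul_onesMat_posDef {d : ℕ} {a c : ℝ} (ha : 0 < a) (hc : 0 ≤ c) :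
    (a • (1 : Matrix (Fin d) (Fin d) ℝ) + c • onesMat d).PosDef :=
  (PosDef.one.smul ha).add_posSemidef ((onesMat_posSemidef d).smul hc)

lemma schur_coeff_eq (d ρ lam : ℝ) (hD : d * ρ - ρ + lam + 1 ≠ 0) :
    ρ - d * ρ ^ 2 / (d * ρ - ρ + lam + 1) = ρ * (1 - ρ + lam) / (d * ρ - ρ + lam + 1) := by
  rw [eq_div_iff hD, sub_mul, div_mul_cancel₀ _ hD]
  ring

theorem stmt_7_general (d₁ d₂ : ℕ) (ρ lam : ℝ)
    (hρ : ρ ∈ Set.Ioo (0 : ℝ) 1) (hlam : 0 ≤ lam) :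
    let c : ℝ := ρ - d₂ * ρ ^ 2 / (d₂ * ρ - ρ + lam + 1)
    let H : Matrix (Fin d₁) (Fin d₁) ℝ :=
      (1 - ρ) • (1 : Matrix (Fin d₁) (Fin d₁) ℝ) + c • onesMat d₁
    H.IsSymm ∧ H.PosDef ∧
      -- largest eigenvalue 1 - ρ + d₁ c, with eigenvector 1_{d₁}
      H.mulVec (fun _ => 1) = (1 - ρ + d₁ * c) • (fun _ => (1 : ℝ)) ∧
      -- smallest eigenvalue 1 - ρ on mean-zero vectors
      (∀ v : Fin d₁ → ℝ, ∑ i, v i = 0 → H.mulVec v = (1 - ρ) • v) ∧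
      -- the resulting condition number
      (1 - ρ + d₁ * c) / (1 - ρ) =
        1 + (1 - ρ + lam) / (d₂ * ρ - ρ + lam + 1) * (d₁ * ρ / (1 - ρ)) := by
  intro c H
  obtain ⟨hρ0, hρ1⟩ := hρ
  have hD : 0 < (d₂ : ℝ) * ρ - ρ + lam + 1 := by nlinarith [Nat.cast_nonneg (α := ℝ) d₂]
  have hc : c = ρ * (1 - ρ + lam) / (d₂ * ρ - ρ + lam + 1) := schur_coeff_eq _ _ _ hD.ne'
  have hH : H.PosDef :=
    smul_one_add_smul_onesMat_posDef (by linarith) (hc ▸ by positivity)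
  refine ⟨hH.isHermitian, hH, ?_, fun v hv => ?_, ?_⟩
  · rw [smul_one_add_smul_onesMat_mulVec]
    ext i
    simp only [Pi.add_apply, Pi.smul_apply, smul_eq_mul, Finset.sum_const, Finset.card_univ,
      Fintype.card_fin, nsmul_eq_mul]
    ring
  · simp [H, smul_one_add_smul_onesMat_mulVec, hv]
  · rw [hc]
    field_simp

theorem stmt_7 (d₁ d₂ : ℕ) (hd₁ : 1 ≤ d₁) (hd₂ : 1 ≤ d₂) (ρ lam : ℝ)
    (hρ : ρ ∈ Set.Ioo (0 : ℝ) 1) (hlam : 0 ≤ lam) :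
    let c : ℝ := ρ - d₂ * ρ ^ 2 / (d₂ * ρ - ρ + lam + 1)
    let H : Matrix (Fin d₁) (Fin d₁) ℝ :=
      (1 - ρ) • (1 : Matrix (Fin d₁) (Fin d₁) ℝ) + c • onesMat d₁
    H.IsSymm ∧ H.PosDef ∧
      -- largest eigenvalue 1 - ρ + d₁ c, with eigenvector 1_{d₁}
      H.mulVec (fun _ => 1) = (1 - ρ + d₁ * c) • (fun _ => (1 : ℝ)) ∧
      -- smallest eigenvalue 1 - ρ on mean-zero vectors
      (∀ v : Fin d₁ → ℝ, ∑ i, v i = 0 → H.mulVec v = (1 - ρ) • v) ∧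
      -- the resulting condition number
      (1 - ρ + d₁ * c) / (1 - ρ) =
        1 + (1 - ρ + lam) / (d₂ * ρ - ρ + lam + 1) * (d₁ * ρ / (1 - ρ)) :=
  stmt_7_general d₁ d₂ ρ lam hρ hlam
end

section
/- Let S ∈ ℝ^{n×m} be a matrix with positive entries whose row sums form the vector μ and whose column sums form ν (both strictly positive). Let S̄ = S_{:,1:m−1} be S with its last column removed and ν̄ the first m−1 entries of ν. Then the matrix K = diag(ν̄) − S̄ᵀ diag(μ)^{-1} S̄ is symmetric positive definite. -/
open Matrix BigOperators

/-!
Expanding the quadratic form and using that the column sums of `S̄` are `ν̄`,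
`xᵀ K x = ∑ᵢ (∑ⱼ S̄ᵢⱼ xⱼ² - μᵢ⁻¹ (∑ⱼ S̄ᵢⱼ xⱼ)²)`. By Cauchy–Schwarz with weights `S̄ᵢⱼ`,
`(∑ⱼ S̄ᵢⱼ xⱼ)² ≤ (∑ⱼ S̄ᵢⱼ) ∑ⱼ S̄ᵢⱼ xⱼ²`, and the row sums of `S̄` are strictly below `μᵢ`
because the removed last column is positive. So every summand is positive when `x ≠ 0`.
-/

open Finset

theorem inv_mul_sq_sum_lt_sum_mul_sq {κ : Type*} (s : Finset κ) {w x : κ → ℝ} {d : ℝ}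
    (hw : ∀ j ∈ s, 0 ≤ w j) (hd : ∑ j ∈ s, w j < d) (hpos : 0 < ∑ j ∈ s, w j * x j ^ 2) :
    d⁻¹ * (∑ j ∈ s, w j * x j) ^ 2 < ∑ j ∈ s, w j * x j ^ 2 := by
  have hd0 : 0 < d := (sum_nonneg hw).trans_lt hd
  have cauchy_schwarz :
      (∑ j ∈ s, w j * x j) ^ 2 ≤ (∑ j ∈ s, w j) * ∑ j ∈ s, w j * x j ^ 2 :=
    sum_sq_le_sum_mul_sum_of_sq_le_mul s hw (fun j hj => mul_nonneg (hw j hj) (sq_nonneg _))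
      fun j _ => le_of_eq (by ring)
  rw [inv_mul_lt_iff₀ hd0]
  calc _ ≤ _ := cauchy_schwarz
    _ < d * ∑ j ∈ s, w j * x j ^ 2 := mul_lt_mul_of_pos_right hd hpos

section

variable {ι κ : Type*} [Fintype ι] [Fintype κ] [DecidableEq ι] [DecidableEq κ]

theorem dotProduct_diagonal_sub_transpose_mul_diagonal_mul_mulVec (v : κ → ℝ) (e : ι → ℝ)
    (A : Matrix ι κ ℝ) (x : κ → ℝ) :
    x ⬝ᵥ (diagonal v - Aᵀ * diagonal e * A) *ᵥ x =
      ∑ j, v j * x j ^ 2 - ∑ i, e i * (A *ᵥ x) i ^ 2 := by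
  rw [sub_mulVec, dotProduct_sub, ← mulVec_mulVec, ← mulVec_mulVec, dotProduct_mulVec x Aᵀ,
    vecMul_transpose]
  simp only [mulVec_diagonal, dotProduct]
  congr 1 <;> exact sum_congr rfl fun _ _ => by ring

theorem posDef_diagonal_colSum_sub_transpose_mul_diagonal_inv_mul [Nonempty ι]
    {A : Matrix ι κ ℝ} (hA : ∀ i j, 0 < A i j) {d : ι → ℝ} (hd : ∀ i, ∑ j, A i j < d i) :
    (diagonal (fun j => ∑ i, A i j) - Aᵀ * diagonal (fun i => (d i)⁻¹) * A).PosDef := by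
  refine .of_dotProduct_mulVec_pos ((isHermitian_diagonal _).sub ?_) fun x hx => ?_
  · simpa using isHermitian_conjTranspose_mul_mul A (isHermitian_diagonal fun i => (d i)⁻¹)
  obtain ⟨j₀, hj₀⟩ : ∃ j, x j ≠ 0 := Function.ne_iff.mp hx
  have row_pos : ∀ i, 0 < ∑ j, A i j * x j ^ 2 := fun i =>
    sum_pos' (fun j _ => mul_nonneg (hA i j).le (sq_nonneg _))
      ⟨j₀, mem_univ _, mul_pos (hA i j₀) (by positivity)⟩
  rw [star_trivial, dotProduct_diagonal_sub_transpose_mul_diagonal_mul_mulVec, sub_pos]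
  calc ∑ i, (d i)⁻¹ * (A *ᵥ x) i ^ 2 < ∑ i, ∑ j, A i j * x j ^ 2 :=
        sum_lt_sum_of_nonempty univ_nonempty fun i _ =>
          inv_mul_sq_sum_lt_sum_mul_sq univ (fun j _ => (hA i j).le) (hd i) (row_pos i)
    _ = ∑ j, (∑ i, A i j) * x j ^ 2 := by rw [sum_comm]; simp_rw [sum_mul]

end

theorem inv_diagonal_of_ne_zero {ι : Type*} [Fintype ι] [DecidableEq ι] {v : ι → ℝ}
    (hv : ∀ i, v i ≠ 0) : (diagonal v)⁻¹ = diagonal fun i => (v i)⁻¹ :=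
  inv_eq_right_inv <| by
    rw [diagonal_mul_diagonal, ← diagonal_one]
    exact congrArg diagonal (funext fun i => mul_inv_cancel₀ (hv i))

theorem stmt_13_general (n m : ℕ) (S : Matrix (Fin n) (Fin (m + 1)) ℝ)
    (hS : ∀ i j, 0 < S i j)
    (μ : Fin n → ℝ) (ν : Fin (m + 1) → ℝ)
    (hμ : ∀ i, ∑ j, S i j = μ i) (hν : ∀ j, ∑ i, S i j = ν j)
    (hνpos : ∀ j, 0 < ν j) :
    -- S̄ is S with its last column removed, ν̄ the first m entries of ν
    let Sbar : Matrix (Fin n) (Fin m) ℝ := Matrix.of fun i j => S i j.castSucc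
    let νbar : Fin m → ℝ := fun j => ν j.castSucc
    let K : Matrix (Fin m) (Fin m) ℝ :=
      Matrix.diagonal νbar - Sbarᵀ * (Matrix.diagonal μ)⁻¹ * Sbar
    K.PosDef := by
  intro Sbar νbar K
  have : Nonempty (Fin n) :=
    univ_nonempty_iff.mp (nonempty_of_sum_ne_zero ((hν 0).trans_ne (hνpos 0).ne'))
  have hSbar : ∀ i j, 0 < Sbar i j := fun i j => hS i j.castSucc
  have row_sum_lt : ∀ i, ∑ j, Sbar i j < μ i := fun i => by
    rw [← hμ i, Fin.sum_univ_castSucc]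
    exact lt_add_of_pos_right _ (hS i (Fin.last m))
  have col_sum : νbar = fun j => ∑ i, Sbar i j := funext fun j => (hν j.castSucc).symm
  have hμ_ne : ∀ i, μ i ≠ 0 := fun i =>
    (hμ i ▸ sum_pos (fun j _ => hS i j) univ_nonempty).ne'
  change (diagonal νbar - Sbarᵀ * (diagonal μ)⁻¹ * Sbar).PosDef
  rw [col_sum, inv_diagonal_of_ne_zero hμ_ne]
  exact posDef_diagonal_colSum_sub_transpose_mul_diagonal_inv_mul hSbar row_sum_lt

theorem stmt_13 (n m : ℕ) (S : Matrix (Fin n) (Fin (m + 1)) ℝ)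
    (hS : ∀ i j, 0 < S i j)
    (μ : Fin n → ℝ) (ν : Fin (m + 1) → ℝ)
    (hμ : ∀ i, ∑ j, S i j = μ i) (hν : ∀ j, ∑ i, S i j = ν j)
    (hμpos : ∀ i, 0 < μ i) (hνpos : ∀ j, 0 < ν j) :
    -- S̄ is S with its last column removed, ν̄ the first m entries of ν
    let Sbar : Matrix (Fin n) (Fin m) ℝ := Matrix.of fun i j => S i j.castSucc
    let νbar : Fin m → ℝ := fun j => ν j.castSucc
    let K : Matrix (Fin m) (Fin m) ℝ :=
      Matrix.diagonal νbar - Sbarᵀ * (Matrix.diagonal μ)⁻¹ * Sbar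
    K.PosDef :=
  stmt_13_general n m S hS μ ν hμ hν hνpos
end
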